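/- Let 𝓛 be a finite set, Q a pmf on 𝓛, Λ : 𝓛 → ℝ, and κ* ∈ [0,1]. For each n let 𝕝ₙ : 𝓛 → ℕ with ∑_l 𝕝ₙ(l) = n and suppose 𝕝ₙ(l)/n → Q(l) for every l. Let κₙ := ⌊n·κ*⌋ and define ωₙ := inf{c ∈ ℝ : ∑_{l} 𝕝ₙ(l)·1[Λ(l) > c] ≤ κₙ}. Define ω₀ := inf{c : ∑_l Q(l)·1[Λ(l) > c] ≤ κ*}. If ∑_l Q(l)·1[Λ(l) > ω₀] < κ* < ∑_l Q(l)·1[Λ(l) ≥ ω₀], then ωₙ → ω₀ as n → ∞. -/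
import Mathlib


open Finset Filter

/-- Convergence of the empirical rank-and-treat threshold: if empirical proportions
`𝕝ₙ(l)/n` converge to `Q(l)`, the per-capita budget is `κₙ = ⌊n κ*⌋`, and the
population threshold `ω₀` is non-degenerate (`∑ Q 1[Λ > ω₀] < κ* < ∑ Q 1[Λ ≥ ω₀]`),
then the empirical thresholds `ωₙ` converge to `ω₀`. -/
theorem stmt6
    {𝓛 : Type*} [Fintype 𝓛] (Q : 𝓛 → ℝ) (hQ0 : ∀ l, 0 ≤ Q l) (hQ1 : ∑ l, Q l = 1)
    (Λ : 𝓛 → ℝ) (κstar : ℝ) (hκ0 : 0 ≤ κstar) (hκ1 : κstar ≤ 1)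
    (𝕝 : ℕ → 𝓛 → ℕ) (h𝕝 : ∀ n, ∑ l, 𝕝 n l = n)
    (hconv : ∀ l, Tendsto (fun n => (𝕝 n l : ℝ) / n) atTop (nhds (Q l)))
    (κ : ℕ → ℕ) (hκ : ∀ n, κ n = ⌊(n : ℝ) * κstar⌋₊)
    (ωseq : ℕ → ℝ)
    (hωseq : ∀ n, ωseq n =
      sInf {c : ℝ | ∑ l ∈ univ.filter (fun l => Λ l > c), 𝕝 n l ≤ κ n})
    (ω₀ : ℝ)
    (hω₀ : ω₀ = sInf {c : ℝ | ∑ l ∈ univ.filter (fun l => Λ l > c), Q l ≤ κstar})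
    (hlt : ∑ l ∈ univ.filter (fun l => Λ l > ω₀), Q l < κstar)
    (hgt : κstar < ∑ l ∈ univ.filter (fun l => Λ l ≥ ω₀), Q l) :
    Tendsto ωseq atTop (nhds ω₀) := by
  have hsum : ∀ s : Finset 𝓛, Tendsto (fun n => (∑ l ∈ s, (𝕝 n l : ℝ)) / n)
      atTop (nhds (∑ l ∈ s, Q l)) := by
    intro s
    have := tendsto_finset_sum s (fun l _ => hconv l)
    simpa [Finset.sum_div] using this
  have hEq : ∀ᶠ n in atTop, ωseq n = ω₀ := by
    filter_upwards [(hsum (univ.filter (fun l => Λ l > ω₀))).eventually_lt_const hlt,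
      (hsum (univ.filter (fun l => Λ l ≥ ω₀))).eventually_const_lt hgt,
      eventually_ge_atTop 1] with n h1 h2 hn
    have hn0 : (0 : ℝ) < n := by exact_mod_cast hn
    have hA : ∑ l ∈ univ.filter (fun l => Λ l > ω₀), 𝕝 n l ≤ κ n := by
      rw [hκ]
      apply Nat.le_floor
      have h1' := (div_lt_iff₀ hn0).mp h1
      push_cast
      nlinarith
    have hB : κ n < ∑ l ∈ univ.filter (fun l => Λ l ≥ ω₀), 𝕝 n l := by
      have hk : (κ n : ℝ) ≤ (n : ℝ) * κstar := by
        rw [hκ]; exact Nat.floor_le (by positivity)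
      have h2' := (lt_div_iff₀ hn0).mp h2
      have : (κ n : ℝ) < ∑ l ∈ univ.filter (fun l => Λ l ≥ ω₀), (𝕝 n l : ℝ) := by
        nlinarith
      exact_mod_cast this
    have hmem : ω₀ ∈ {c : ℝ | ∑ l ∈ univ.filter (fun l => Λ l > c), 𝕝 n l ≤ κ n} := hA
    have hlb : ∀ c ∈ {c : ℝ | ∑ l ∈ univ.filter (fun l => Λ l > c), 𝕝 n l ≤ κ n},
        ω₀ ≤ c := by
      intro c hc
      by_contra hcon
      push_neg at hcon
      have hsub : univ.filter (fun l => Λ l ≥ ω₀) ⊆ univ.filter (fun l => Λ l > c) := by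
        intro l hl
        simp only [Finset.mem_filter, Finset.mem_univ, true_and] at hl ⊢
        exact lt_of_lt_of_le hcon hl
      have hle : ∑ l ∈ univ.filter (fun l => Λ l ≥ ω₀), 𝕝 n l
          ≤ ∑ l ∈ univ.filter (fun l => Λ l > c), 𝕝 n l :=
        Finset.sum_le_sum_of_subset hsub
      have hc' : ∑ l ∈ univ.filter (fun l => Λ l > c), 𝕝 n l ≤ κ n := hc
      omega
    rw [hωseq n]
    exact le_antisymm (csInf_le ⟨ω₀, hlb⟩ hmem) (le_csInf ⟨ω₀, hmem⟩ hlb)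
  exact Tendsto.congr' (EventuallyEq.symm hEq) tendsto_const_nhds
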